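/- For every complex number z, sin z = z · Σ_{n=0}^∞ (1 / ((2n+1) · n!)) · (z/2)^n · J_n(z), where J_n is the Bessel function of the first kind of integer order n. -/

import Mathlib

/-!
Expanding every `J_n(z)` turns the right-hand side into a double series over `(n, m)`, which
converges absolutely: its terms are dominated by `(r ^ n / n!) (r ^ m / m!)` with `r = |z / 2| ^ 2`.
Summing it along the diagonals `n + m = k` instead, the `k`-th diagonal is
`(-1) ^ k (z / 2) ^ (2k) / k! ^ 2` times `∑_{n ≤ k} (-1) ^ n C(k, n) / (2n + 1)`. The partial fraction
expansion `∑_{n ≤ k} (-1) ^ n C(k, n) / (x + n) = k! / (x (x + 1) ⋯ (x + k))` at `x = 1 / 2` evaluates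
this sum to `(2k)‼ / (2k + 1)‼`, and the diagonal becomes `(-1) ^ k z ^ (2k) / (2k + 1)!`, the `k`-th
term of the Taylor series of `sin z / z`.
-/

/-- Bessel function of the first kind `J_n(z)` of nonnegative integer order. -/
noncomputable def besselJNat (n : ℕ) (z : ℂ) : ℂ :=
  ∑' m : ℕ, (-1 : ℂ) ^ m / ((n + m).factorial * m.factorial) * (z / 2) ^ (n + 2 * m)

open Finset
open scoped Nat

theorem prod_range_two_mul_add_one (k : ℕ) : ∏ j ∈ range (k + 1), (2 * j + 1) = (2 * k + 1)‼ := by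
  rw [Nat.doubleFactorial_eq_prod_odd, prod_range_succ', mul_zero, zero_add, mul_one]

section PartialFractions

variable {K : Type*} [Field K]

theorem sum_range_choose_mul_neg_one_pow_div_add (k : ℕ) (x : K)
    (hx : ∀ j ∈ range (k + 1), x + j ≠ 0) :
    ∑ n ∈ range (k + 1), (k.choose n : K) * ((-1) ^ n / (x + n)) =
      k ! / ∏ j ∈ range (k + 1), (x + j) := by
  induction k generalizing x with
  | zero => simp
  | succ k ih =>
    have hx' : ∀ j ∈ range (k + 1), x + j ≠ 0 := fun j hj =>
      hx j (range_subset_range.2 (by omega) hj)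
    have hx1 : ∀ j ∈ range (k + 1), x + 1 + j ≠ 0 := fun j hj => by
      simpa [add_assoc, add_comm (1 : K)] using hx (j + 1) (by simp_all)
    have hx0 : x ≠ 0 := by simpa using hx 0 (by simp)
    have hP := prod_ne_zero_iff.2 hx'
    have hQ := prod_ne_zero_iff.2 hx1
    have hshift : ∏ j ∈ range (k + 1 + 1), (x + j) = x * ∏ j ∈ range (k + 1), (x + 1 + j) := by
      simp [prod_range_succ', add_assoc, add_comm (1 : K), mul_comm]
    have hlast :
        ∏ j ∈ range (k + 1 + 1), (x + j) = (∏ j ∈ range (k + 1), (x + j)) * (x + (k + 1)) := by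
      simp [prod_range_succ]
    -- Pascal's rule splits the sum for `k + 1` at `x` into the sums for `k` at `x` and `x + 1`.
    have hsecond : ∑ i ∈ range (k + 1), (k.choose i : K) * ((-1) ^ (i + 1) / (x + ↑(i + 1))) =
        -∑ i ∈ range (k + 1), (k.choose i : K) * ((-1) ^ i / (x + 1 + i)) := by
      rw [← sum_neg_distrib]
      refine sum_congr rfl fun i _ => ?_
      push_cast
      ring
    rw [sum_choose_succ_mul (fun n _ => (-1 : K) ^ n / (x + n)) k, hsecond, ih x hx',
      ih (x + 1) hx1, ← sub_eq_add_neg, Nat.factorial_succ, div_sub_div _ _ hP hQ,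
      div_eq_div_iff (mul_ne_zero hP hQ) (hshift ▸ mul_ne_zero hx0 hQ)]
    push_cast
    linear_combination (k ! : K) *
      ((∏ j ∈ range (k + 1), (x + 1 + j)) * hlast - (∏ j ∈ range (k + 1), (x + j)) * hshift)

theorem sum_range_choose_mul_neg_one_pow_div_two_mul_add_one [CharZero K] (k : ℕ) :
    ∑ n ∈ range (k + 1), (k.choose n : K) * ((-1) ^ n / (2 * n + 1)) =
      (2 * k)‼ / (2 * k + 1)‼ := by
  have hhalf : ∀ j : ℕ, (2⁻¹ : K) + j = ((2 * j + 1 : ℕ) : K) / 2 := fun j => by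
    push_cast; ring
  have hx : ∀ j ∈ range (k + 1), (2⁻¹ : K) + j ≠ 0 := fun j _ => by
    rw [hhalf]; exact div_ne_zero (Nat.cast_ne_zero.2 (by omega)) two_ne_zero
  have hprod : ∏ j ∈ range (k + 1), ((2⁻¹ : K) + j) = (2 * k + 1)‼ / 2 ^ (k + 1) := by
    simp_rw [hhalf, prod_div_distrib, prod_const, card_range, ← Nat.cast_prod,
      prod_range_two_mul_add_one]
  have hterm : ∀ n : ℕ, (-1 : K) ^ n / (2 * n + 1) = 2⁻¹ * ((-1) ^ n / (2⁻¹ + n)) := fun n => by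
    rw [hhalf]; push_cast; field_simp
  simp_rw [hterm, mul_left_comm _ (2⁻¹ : K), ← mul_sum,
    sum_range_choose_mul_neg_one_pow_div_add k _ hx, hprod, Nat.doubleFactorial_two_mul]
  push_cast
  field_simp
  ring

end PartialFractions

theorem HasSum.sum_antidiagonal {A α : Type*} [AddCommMonoid A] [HasAntidiagonal A]
    [AddCommMonoid α] [TopologicalSpace α] [ContinuousAdd α] [RegularSpace α]
    {f : A × A → α} {a : α} (h : HasSum f a) :
    HasSum (fun n => ∑ p ∈ antidiagonal n, f p) a :=
  (HasAntidiagonal.sigmaAntidiagonalEquivProd.hasSum_iff.2 h).sigma fun n =>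
    (antidiagonal n).hasSum f

noncomputable def sinBesselSummand (z : ℂ) (p : ℕ × ℕ) : ℂ :=
  1 / (((2 * p.1 + 1 : ℕ) : ℂ) * p.1 !) * (z / 2) ^ p.1 *
    ((-1) ^ p.2 / (((p.1 + p.2)! : ℂ) * p.2 !) * (z / 2) ^ (p.1 + 2 * p.2))

theorem tsum_sinBesselSummand_mk (z : ℂ) (n : ℕ) :
    ∑' m, sinBesselSummand z (n, m) =
      1 / (((2 * n + 1 : ℕ) : ℂ) * n !) * (z / 2) ^ n * besselJNat n z := by
  rw [besselJNat, ← tsum_mul_left]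
  rfl

theorem norm_sinBesselSummand_le (z : ℂ) (p : ℕ × ℕ) :
    ‖sinBesselSummand z p‖ ≤ (‖z / 2‖ ^ 2) ^ p.1 / p.1 ! * ((‖z / 2‖ ^ 2) ^ p.2 / p.2 !) := by
  obtain ⟨n, m⟩ := p
  have h2n : (1 : ℝ) ≤ (2 * n + 1 : ℕ) := by exact_mod_cast Nat.le_add_left 1 _
  have hnm : (1 : ℝ) ≤ (n + m)! := by exact_mod_cast (n + m).factorial_pos
  calc ‖sinBesselSummand z (n, m)‖
      = (‖z / 2‖ ^ 2) ^ n / n ! * ((‖z / 2‖ ^ 2) ^ m / m !) / ((2 * n + 1 : ℕ) * (n + m)! : ℝ) := by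
        simp only [sinBesselSummand, norm_mul, norm_div, norm_pow, norm_neg, norm_one, one_pow,
          Complex.norm_natCast]
        ring
    _ ≤ _ := div_le_self (by positivity) (one_le_mul_of_one_le_of_one_le h2n hnm)

theorem summable_sinBesselSummand (z : ℂ) : Summable (sinBesselSummand z) :=
  .of_norm_bounded
    ((Real.summable_pow_div_factorial _).mul_of_nonneg (Real.summable_pow_div_factorial _)
      (fun _ => by positivity) (fun _ => by positivity))
    (norm_sinBesselSummand_le z)

theorem sinBesselSummand_mk (z : ℂ) (n m : ℕ) :
    sinBesselSummand z (n, m) = (-1) ^ (n + m) * (z / 2) ^ (2 * (n + m)) / ((n + m)! : ℂ) ^ 2 *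
      ((n + m).choose n * ((-1) ^ n / (2 * n + 1))) := by
  have hchoose : ((n + m).choose n * n ! * m ! : ℂ) = (n + m)! := by
    rw [mul_right_comm]
    exact_mod_cast add_comm m n ▸ Nat.add_choose_mul_factorial_mul_factorial m n
  have hsign : (-1 : ℂ) ^ (n + m) * (-1) ^ n = (-1) ^ m := by
    rw [← pow_add, add_right_comm, ← two_mul, pow_add, pow_mul]; norm_num
  have hodd : (2 * n + 1 : ℂ) ≠ 0 := by exact_mod_cast (2 * n).succ_ne_zero
  rw [sinBesselSummand, ← hsign, ← hchoose]
  push_cast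
  field_simp
  ring

theorem sum_antidiagonal_sinBesselSummand (z : ℂ) (k : ℕ) :
    ∑ p ∈ antidiagonal k, sinBesselSummand z p = (-1) ^ k * z ^ (2 * k) / (2 * k + 1)! := by
  rw [sum_congr rfl fun p hp => (mem_antidiagonal.1 hp) ▸ sinBesselSummand_mk z p.1 p.2,
    ← mul_sum, Nat.sum_antidiagonal_eq_sum_range_succ_mk,
    sum_range_choose_mul_neg_one_pow_div_two_mul_add_one, Nat.factorial_eq_mul_doubleFactorial,
    Nat.doubleFactorial_two_mul, div_pow, pow_mul]
  push_cast
  field_simp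
  ring

/-- Expansion of the sine function in terms of Bessel functions:
`sin z = z · Σ_{n=0}^∞ (z/2)^n J_n(z) / ((2n+1) n!)`. -/
theorem sin_eq_besselJ_sum (z : ℂ) :
    Complex.sin z =
      z * ∑' n : ℕ, 1 / (((2 * n + 1 : ℕ) : ℂ) * n.factorial) * (z / 2) ^ n * besselJNat n z := by
  have hs := (summable_sinBesselSummand z).hasSum
  have hrows : HasSum (fun n : ℕ => 1 / (((2 * n + 1 : ℕ) : ℂ) * n !) * (z / 2) ^ n * besselJNat n z)
      (∑' p, sinBesselSummand z p) :=
    hs.prod_fiberwise fun n =>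
      tsum_sinBesselSummand_mk z n ▸ ((summable_sinBesselSummand z).prod_factor n).hasSum
  have hdiags : HasSum (fun k : ℕ => (-1) ^ k * z ^ (2 * k) / (2 * k + 1)!)
      (∑' p, sinBesselSummand z p) := by
    simpa only [sum_antidiagonal_sinBesselSummand] using hs.sum_antidiagonal
  have hterm (k : ℕ) : (-1) ^ k * z ^ (2 * k + 1) / (2 * k + 1)! =
      z * ((-1) ^ k * z ^ (2 * k) / (2 * k + 1)!) := by
    ring
  rw [hrows.tsum_eq]
  exact (Complex.hasSum_sin z).unique (by simpa only [hterm] using hdiags.mul_left z)
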